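/- A point z = (x,p) ∈ ℝ³×ℝ³ is a fold point, i.e. H₁(z) = 0, H₀₁(z) = 0 and H₀₀₁(z) ≠ 0, if and only if p₁ = p₃ = 0 and p₂ ≠ 0; at such a point H₀₀₁(z) = c₃c₅c₇p₂. Moreover every fold point is parabolic: since H₁₀₁ ≡ 0, the two second derivatives Φ̈₊ = (H₀₀₁ + H₁₀₁)(z) and Φ̈₋ = (H₀₀₁ − H₁₀₁)(z) coincide, so Φ̈₊·Φ̈₋ = H₀₀₁(z)² > 0. -/

import Mathlib

noncomputable section

/-- Lie bracket of vector fields on ℝ³: `[F,G](x) = G'(x)F(x) − F'(x)G(x)`. -/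
def lieBracket (F G : (Fin 3 → ℝ) → (Fin 3 → ℝ)) (x : Fin 3 → ℝ) : Fin 3 → ℝ :=
  fderiv ℝ G x (F x) - fderiv ℝ F x (G x)

/-- Drift vector field of the electric vehicle. -/
def F0 (c1 c2 c3 c4 c5 c6 : ℝ) (x : Fin 3 → ℝ) : Fin 3 → ℝ :=
  ![c1 * x 0 + c2 * x 2, c3 * x 2, c4 + c5 * x 0 + c6 * (x 2) ^ 2]

/-- Control vector field of the electric vehicle. -/
def F1 (c7 : ℝ) (_x : Fin 3 → ℝ) : Fin 3 → ℝ := ![c7, 0, 0]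

/-- `H₀₀₁(x,p) = ⟨p, F₀₀₁(x)⟩`. -/
def H001 (c1 c2 c3 c4 c5 c6 c7 : ℝ) (x p : Fin 3 → ℝ) : ℝ :=
  ∑ i, p i * lieBracket (F0 c1 c2 c3 c4 c5 c6) (lieBracket (F0 c1 c2 c3 c4 c5 c6) (F1 c7)) x i

/-- `H₁₀₁(x,p) = ⟨p, F₁₀₁(x)⟩`. -/
def H101 (c1 c2 c3 c4 c5 c6 c7 : ℝ) (x p : Fin 3 → ℝ) : ℝ :=
  ∑ i, p i * lieBracket (F1 c7) (lieBracket (F0 c1 c2 c3 c4 c5 c6) (F1 c7)) x i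

/-! Bracketing with a constant field `v` is `[F, v] = -F' v`. As `F₁` is constant, so is
`F₀₁ = -F₀' F₁ = -c₇ (c₁, 0, c₅)`, since it only sees the linear part of `F₀`. Hence
`F₁₀₁ = 0`, and `F₀₀₁ = -F₀' F₀₁` is explicit; on `p₁ = p₃ = 0` only its second component
`c₃c₅c₇` survives in `H₀₀₁`. -/

lemma lieBracket_const_right (F : (Fin 3 → ℝ) → (Fin 3 → ℝ)) (v x : Fin 3 → ℝ) :
    lieBracket F (fun _ => v) x = -fderiv ℝ F x v := by
  simp [lieBracket]

open ContinuousLinearMap in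
def fderivF0 (c1 c2 c3 c5 c6 : ℝ) (x : Fin 3 → ℝ) : (Fin 3 → ℝ) →L[ℝ] (Fin 3 → ℝ) :=
  pi ![c1 • proj 0 + c2 • proj 2, c3 • proj 2, c5 • proj 0 + (2 * c6 * x 2) • proj 2]

section

variable {c1 c2 c3 c4 c5 c6 c7 : ℝ}

lemma fderivF0_apply (x v : Fin 3 → ℝ) :
    fderivF0 c1 c2 c3 c5 c6 x v =
      ![c1 * v 0 + c2 * v 2, c3 * v 2, c5 * v 0 + 2 * c6 * x 2 * v 2] := by
  funext i
  fin_cases i <;> simp [fderivF0]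

lemma hasFDerivAt_F0 (x : Fin 3 → ℝ) :
    HasFDerivAt (F0 c1 c2 c3 c4 c5 c6) (fderivF0 c1 c2 c3 c5 c6 x) x := by
  rw [hasFDerivAt_pi']
  intro i
  have hx0 := hasFDerivAt_apply (𝕜 := ℝ) (0 : Fin 3) x
  have hx2 := hasFDerivAt_apply (𝕜 := ℝ) (2 : Fin 3) x
  fin_cases i
  · simpa [F0, fderivF0] using (hx0.const_mul c1).fun_add (hx2.const_mul c2)
  · simpa [F0, fderivF0] using hx2.const_mul c3
  · convert ((hx0.const_mul c5).fun_add ((hx2.pow 2).const_mul c6)).const_add c4 using 1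
    · funext v
      simp [F0, add_assoc]
    · ext v
      simp [fderivF0]
      ring

lemma lieBracket_F0_F1 :
    lieBracket (F0 c1 c2 c3 c4 c5 c6) (F1 c7) = fun _ => ![-(c1 * c7), 0, -(c5 * c7)] := by
  funext x
  unfold F1
  rw [lieBracket_const_right, (hasFDerivAt_F0 x).fderiv, fderivF0_apply]
  simp

lemma lieBracket_F0_F01 (x : Fin 3 → ℝ) :
    lieBracket (F0 c1 c2 c3 c4 c5 c6) (lieBracket (F0 c1 c2 c3 c4 c5 c6) (F1 c7)) x =
      ![c1 * c1 * c7 + c2 * c5 * c7, c3 * c5 * c7, c5 * c1 * c7 + 2 * c6 * x 2 * (c5 * c7)] := by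
  rw [lieBracket_F0_F1, lieBracket_const_right, (hasFDerivAt_F0 x).fderiv,
    fderivF0_apply]
  funext i
  fin_cases i <;> simp <;> ring

lemma lieBracket_F1_F01 (x : Fin 3 → ℝ) :
    lieBracket (F1 c7) (lieBracket (F0 c1 c2 c3 c4 c5 c6) (F1 c7)) x = 0 := by
  rw [lieBracket_F0_F1, lieBracket_const_right]
  unfold F1
  simp

lemma H001_eq (x p : Fin 3 → ℝ) :
    H001 c1 c2 c3 c4 c5 c6 c7 x p =
      p 0 * (c1 * c1 * c7 + c2 * c5 * c7) + p 1 * (c3 * c5 * c7) +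
        p 2 * (c5 * c1 * c7 + 2 * c6 * x 2 * (c5 * c7)) := by
  simp [H001, lieBracket_F0_F01, Fin.sum_univ_three]

lemma H101_eq_zero (x p : Fin 3 → ℝ) :
    H101 c1 c2 c3 c4 c5 c6 c7 x p = 0 := by
  simp [H101, lieBracket_F1_F01]

lemma H001_eq_of_p0_p2 {x p : Fin 3 → ℝ} (hp0 : p 0 = 0) (hp2 : p 2 = 0) :
    H001 c1 c2 c3 c4 c5 c6 c7 x p = c3 * c5 * c7 * p 1 := by
  rw [H001_eq, hp0, hp2]
  ring

end

theorem stmt9_general (c1 c2 c3 c4 c5 c6 c7 : ℝ)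
    (h3 : 0 < c3)
    (h5 : 0 < c5) (h7 : 0 < c7) (x p : Fin 3 → ℝ) :
    ((c7 * p 0 = 0 ∧ -(c7 * (c1 * p 0 + c5 * p 2)) = 0 ∧ H001 c1 c2 c3 c4 c5 c6 c7 x p ≠ 0) ↔
      (p 0 = 0 ∧ p 2 = 0 ∧ p 1 ≠ 0)) ∧
    H101 c1 c2 c3 c4 c5 c6 c7 x p = 0 ∧
    (p 0 = 0 → p 2 = 0 → p 1 ≠ 0 →
      H001 c1 c2 c3 c4 c5 c6 c7 x p = c3 * c5 * c7 * p 1 ∧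
      (H001 c1 c2 c3 c4 c5 c6 c7 x p + H101 c1 c2 c3 c4 c5 c6 c7 x p) *
          (H001 c1 c2 c3 c4 c5 c6 c7 x p - H101 c1 c2 c3 c4 c5 c6 c7 x p)
        = H001 c1 c2 c3 c4 c5 c6 c7 x p ^ 2 ∧
      0 < H001 c1 c2 c3 c4 c5 c6 c7 x p ^ 2) := by
  refine ⟨⟨fun ⟨hH1, hH01, hH001⟩ => ?_, fun ⟨hp0, hp2, hp1⟩ => ?_⟩, H101_eq_zero x p,
    fun hp0 hp2 hp1 => ?_⟩
  · have hp0 : p 0 = 0 := by simpa [h7.ne'] using hH1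
    have hp2 : p 2 = 0 := by simpa [hp0, h7.ne', h5.ne'] using hH01
    refine ⟨hp0, hp2, fun hp1 => hH001 ?_⟩
    rw [H001_eq_of_p0_p2 hp0 hp2, hp1, mul_zero]
  · refine ⟨by simp [hp0], by simp [hp0, hp2], ?_⟩
    rw [H001_eq_of_p0_p2 hp0 hp2]
    positivity
  · have hH001 : H001 c1 c2 c3 c4 c5 c6 c7 x p = c3 * c5 * c7 * p 1 := H001_eq_of_p0_p2 hp0 hp2
    refine ⟨hH001, by rw [H101_eq_zero]; ring, ?_⟩
    rw [hH001]
    positivity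

/-- Fold points are exactly the points with `p₁ = p₃ = 0`, `p₂ ≠ 0`; at such a
point `H₀₀₁ = c₃c₅c₇p₂`, and every fold point is parabolic:
`Φ̈₊ Φ̈₋ = H₀₀₁² > 0` since `H₁₀₁ ≡ 0`. -/
theorem stmt9 (c1 c2 c3 c4 c5 c6 c7 : ℝ)
    (h1 : c1 < 0) (h2 : c2 < 0) (h3 : 0 < c3) (h4 : c4 < 0)
    (h5 : 0 < c5) (h6 : c6 < 0) (h7 : 0 < c7) (x p : Fin 3 → ℝ) :
    ((c7 * p 0 = 0 ∧ -(c7 * (c1 * p 0 + c5 * p 2)) = 0 ∧ H001 c1 c2 c3 c4 c5 c6 c7 x p ≠ 0) ↔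
      (p 0 = 0 ∧ p 2 = 0 ∧ p 1 ≠ 0)) ∧
    H101 c1 c2 c3 c4 c5 c6 c7 x p = 0 ∧
    (p 0 = 0 → p 2 = 0 → p 1 ≠ 0 →
      H001 c1 c2 c3 c4 c5 c6 c7 x p = c3 * c5 * c7 * p 1 ∧
      (H001 c1 c2 c3 c4 c5 c6 c7 x p + H101 c1 c2 c3 c4 c5 c6 c7 x p) *
          (H001 c1 c2 c3 c4 c5 c6 c7 x p - H101 c1 c2 c3 c4 c5 c6 c7 x p)
        = H001 c1 c2 c3 c4 c5 c6 c7 x p ^ 2 ∧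
      0 < H001 c1 c2 c3 c4 c5 c6 c7 x p ^ 2) :=
  stmt9_general c1 c2 c3 c4 c5 c6 c7 h3 h5 h7 x p
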